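/- Let β̂: ℝ → [0,+∞] be convex, lower semicontinuous, with β̂(0)=0 and β̂(r)/r² → +∞ as |r| → +∞. For ε > 0, let β̂_ε denote the Moreau–Yosida regularization β̂_ε(r) := inf_{s ∈ ℝ} { |s−r|²/(2ε) + β̂(s) }. Then for every M > 0 there exist constants C_M > 0 and ε_M > 0 such that β̂_ε(r) ≥ M r² − C_M for every r ∈ ℝ and every ε ∈ (0, ε_M). -/

import Mathlib

/-!
Superquadratic growth gives `β̂ s ≥ 2 M s² - C` for all `s`. Once `ε ≤ 1 / (4 M)` the penalty
`|s - r|² / (2 ε)` is at least `2 M |s - r|²`, and `2 M (|s - r|² + s²) ≥ M r²`, so every term of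
the infimum defining `β̂_ε r` is at least `M r² - C`.
-/

open Filter Topology
open scoped NNReal ENNReal

noncomputable def moreauYosida (f : ℝ → ℝ≥0∞) (ε r : ℝ) : ℝ≥0∞ :=
  ⨅ s : ℝ, (ENNReal.ofReal (|s - r| ^ 2 / (2 * ε)) + f s)

theorem exists_ofReal_mul_sq_sub_le_of_tendsto {f : ℝ → ℝ≥0∞}
    (hf : Tendsto (fun r : ℝ => f r / ENNReal.ofReal (r ^ 2)) (cocompact ℝ) (𝓝 ⊤))
    {M : ℝ} (hM : 0 ≤ M) : ∃ C : ℝ, 0 < C ∧ ∀ s, ENNReal.ofReal (M * s ^ 2 - C) ≤ f s := by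
  have hev : ∀ᶠ s in cocompact ℝ, ENNReal.ofReal M ≤ f s / ENNReal.ofReal (s ^ 2) :=
    hf.eventually (eventually_ge_nhds ENNReal.ofReal_lt_top)
  obtain ⟨R, hR⟩ := Metric.closedBall_compl_subset_of_mem_cocompact hev 0
  refine ⟨M * R ^ 2 + 1, by positivity, fun s => ?_⟩
  by_cases hs : |s| ≤ R
  · have hsR : M * s ^ 2 ≤ M * R ^ 2 := by
      rw [← sq_abs s]
      gcongr
    rw [ENNReal.ofReal_of_nonpos (by linarith)]
    exact zero_le
  · have hsK : s ∈ (Metric.closedBall 0 R)ᶜ := by simpa using hs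
    calc ENNReal.ofReal (M * s ^ 2 - (M * R ^ 2 + 1))
        ≤ ENNReal.ofReal (M * s ^ 2) :=
          ENNReal.ofReal_le_ofReal (by nlinarith [mul_nonneg hM (sq_nonneg R)])
      _ = ENNReal.ofReal M * ENNReal.ofReal (s ^ 2) := ENNReal.ofReal_mul' (sq_nonneg s)
      _ ≤ f s := ENNReal.mul_le_of_le_div (hR hsK)

theorem mul_sq_le_sq_div_add_two_mul_sq {M ε : ℝ} (hM : 0 ≤ M) (hε : 0 < ε)
    (hεM : 4 * M * ε ≤ 1) (r s : ℝ) : M * r ^ 2 ≤ |s - r| ^ 2 / (2 * ε) + 2 * M * s ^ 2 := by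
  have hpenalty : 2 * M * (s - r) ^ 2 ≤ (s - r) ^ 2 / (2 * ε) := by
    rw [le_div_iff₀ (by positivity)]
    nlinarith [sq_nonneg (s - r)]
  have hsplit : r ^ 2 ≤ 2 * ((s - r) ^ 2 + s ^ 2) := by
    nlinarith [sq_nonneg (2 * s - r)]
  rw [sq_abs]
  nlinarith [mul_le_mul_of_nonneg_left hsplit hM]

theorem ofReal_mul_sq_sub_le_moreauYosida {f : ℝ → ℝ≥0∞} {M C ε : ℝ}
    (hf : ∀ s, ENNReal.ofReal (2 * M * s ^ 2 - C) ≤ f s) (hM : 0 ≤ M) (hε : 0 < ε)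
    (hεM : 4 * M * ε ≤ 1) (r : ℝ) :
    ENNReal.ofReal (M * r ^ 2 - C) ≤ moreauYosida f ε r :=
  le_iInf fun s => calc
    ENNReal.ofReal (M * r ^ 2 - C)
        ≤ ENNReal.ofReal (|s - r| ^ 2 / (2 * ε) + (2 * M * s ^ 2 - C)) :=
          ENNReal.ofReal_le_ofReal (by linarith [mul_sq_le_sq_div_add_two_mul_sq hM hε hεM r s])
    _ ≤ ENNReal.ofReal (|s - r| ^ 2 / (2 * ε)) + ENNReal.ofReal (2 * M * s ^ 2 - C) :=
          ENNReal.ofReal_add_le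
    _ ≤ ENNReal.ofReal (|s - r| ^ 2 / (2 * ε)) + f s := by gcongr; exact hf s

theorem moreau_yosida_superquadratic_bound_general
    (βhat : ℝ → ℝ≥0∞)
    (hgrowth : Tendsto (fun r : ℝ => βhat r / ENNReal.ofReal (r ^ 2))
      (Filter.cocompact ℝ) (𝓝 ⊤)) :
    ∀ M : ℝ, 0 < M → ∃ C : ℝ, 0 < C ∧ ∃ εM : ℝ, 0 < εM ∧
      ∀ r : ℝ, ∀ ε : ℝ, 0 < ε → ε < εM →
        ENNReal.ofReal (M * r ^ 2 - C) ≤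
          ⨅ s : ℝ, (ENNReal.ofReal (|s - r| ^ 2 / (2 * ε)) + βhat s) := by
  intro M hM
  obtain ⟨C, hC, hβ⟩ := exists_ofReal_mul_sq_sub_le_of_tendsto hgrowth (by positivity : 0 ≤ 2 * M)
  refine ⟨C, hC, 1 / (4 * M), by positivity, fun r ε hε hεM => ?_⟩
  have hεM' : 4 * M * ε ≤ 1 := by
    rw [lt_div_iff₀ (by positivity)] at hεM
    linarith
  exact ofReal_mul_sq_sub_le_moreauYosida hβ hM.le hε hεM' r

/-- Superquadratic growth of the Moreau–Yosida regularization for small `ε`. -/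
theorem moreau_yosida_superquadratic_bound
    (βhat : ℝ → ℝ≥0∞)
    (hconvex : ∀ x y : ℝ, ∀ a b : ℝ≥0, a + b = 1 →
      βhat ((a : ℝ) * x + (b : ℝ) * y) ≤ (a : ℝ≥0∞) * βhat x + (b : ℝ≥0∞) * βhat y)
    (hlsc : LowerSemicontinuous βhat)
    (hzero : βhat 0 = 0)
    (hgrowth : Tendsto (fun r : ℝ => βhat r / ENNReal.ofReal (r ^ 2))
      (Filter.cocompact ℝ) (𝓝 ⊤)) :
    ∀ M : ℝ, 0 < M → ∃ C : ℝ, 0 < C ∧ ∃ εM : ℝ, 0 < εM ∧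
      ∀ r : ℝ, ∀ ε : ℝ, 0 < ε → ε < εM →
        ENNReal.ofReal (M * r ^ 2 - C) ≤
          ⨅ s : ℝ, (ENNReal.ofReal (|s - r| ^ 2 / (2 * ε)) + βhat s) :=
  moreau_yosida_superquadratic_bound_general βhat hgrowth
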